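/- Let ε ∈ (0, π/20), c₀ > 0, and define φ(ζ) = c₀·(sin((π−ε)ζ + ε/2) + 64(ζ − 1/4)³·sin(ε/2)) for ζ ∈ [0, 1/4]. Suppose additionally that (arccos(φ'(ζ)) − ε/2)² − (π−ε)²·ζ² ≥ 1 and (π − ε)·cos((π−ε)ζ + ε/2) ≥ 12·sin(ε/2) for all ζ ∈ (0, 1/4]. Then for all ζ ∈ (0, 1/4]: φ''(ζ) + (π−ε)²·φ(ζ) + ζ^{−1}·φ'(ζ)·((arccos(φ'(ζ)) − ε/2)² − (π−ε)²·ζ²) ≥ 48·c₀·sin(ε/2)·(4(ζ − 1/4) + 1)² ≥ 0. -/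

import Mathlib

open Real

/-!
Both derivatives of `φ` are explicit. Writing `u = ζ - 1/4` and `s = sin (ε/2)`, the sine terms cancel in
`φ'' + (π-ε)² φ = c₀ s (384 u + 64 (π-ε)² u³)`, while the hypothesis on the cosine gives
`φ' ≥ c₀ s (12 + 192 u²) ≥ 0`, so the factor `(arccos φ' - ε/2)² - (π-ε)² ζ² ≥ 1` may be dropped.
What remains is the polynomial inequality `384 u + 64 K u³ + (12 + 192 u²)/ζ ≥ 768 ζ²` on `(0, 1/4]`
for `K = (π-ε)² ≤ 10`, and `768 ζ² = 48 (4u + 1)²`.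
-/

section Profile

variable (c a b s : ℝ)

theorem hasDerivAt_profile (x : ℝ) :
    HasDerivAt (fun x => c * (sin (a * x + b) + 64 * (x - 1 / 4) ^ 3 * s))
      (c * (a * cos (a * x + b) + 192 * (x - 1 / 4) ^ 2 * s)) x := by
  have hlin : HasDerivAt (fun x => a * x + b) a x := by
    simpa using ((hasDerivAt_id x).const_mul a).add_const b
  have hcube : HasDerivAt (fun x : ℝ => (x - 1 / 4) ^ 3) (3 * (x - 1 / 4) ^ 2) x := by
    simpa using ((hasDerivAt_id' x).sub_const (1 / 4 : ℝ)).fun_pow 3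
  exact ((hlin.sin.add ((hcube.const_mul 64).mul_const s)).const_mul c).congr_deriv (by ring)

theorem hasDerivAt_profile_deriv (x : ℝ) :
    HasDerivAt (fun x => c * (a * cos (a * x + b) + 192 * (x - 1 / 4) ^ 2 * s))
      (c * (-a ^ 2 * sin (a * x + b) + 384 * (x - 1 / 4) * s)) x := by
  have hlin : HasDerivAt (fun x => a * x + b) a x := by
    simpa using ((hasDerivAt_id x).const_mul a).add_const b
  have hsq : HasDerivAt (fun x : ℝ => (x - 1 / 4) ^ 2) (2 * (x - 1 / 4)) x := by
    simpa using ((hasDerivAt_id' x).sub_const (1 / 4 : ℝ)).fun_pow 2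
  exact (((hlin.cos.const_mul a).add ((hsq.const_mul 192).mul_const s)).const_mul c).congr_deriv
    (by ring)

theorem deriv_profile :
    deriv (fun x => c * (sin (a * x + b) + 64 * (x - 1 / 4) ^ 3 * s)) =
      fun x => c * (a * cos (a * x + b) + 192 * (x - 1 / 4) ^ 2 * s) :=
  funext fun x => (hasDerivAt_profile c a b s x).deriv

theorem deriv_deriv_profile :
    deriv (deriv fun x => c * (sin (a * x + b) + 64 * (x - 1 / 4) ^ 3 * s)) =
      fun x => c * (-a ^ 2 * sin (a * x + b) + 384 * (x - 1 / 4) * s) := by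
  rw [deriv_profile]
  exact funext fun x => (hasDerivAt_profile_deriv c a b s x).deriv

end Profile

theorem cubic_bound {K ζ : ℝ} (hK : K ≤ 10) (hζ0 : 0 < ζ) (hζ : ζ ≤ 1 / 4) :
    768 * ζ ^ 2 ≤ 384 * (ζ - 1 / 4) + 64 * K * (ζ - 1 / 4) ^ 3 + ζ⁻¹ * (12 + 192 * (ζ - 1 / 4) ^ 2) := by
  have hcube : 640 * (ζ - 1 / 4) ^ 3 ≤ 64 * K * (ζ - 1 / 4) ^ 3 := by
    have : (ζ - 1 / 4) ^ 3 ≤ 0 := by nlinarith [sq_nonneg (ζ - 1 / 4)]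
    nlinarith
  have hpoly : ζ * (768 * ζ ^ 2 - 384 * (ζ - 1 / 4) - 640 * (ζ - 1 / 4) ^ 3) ≤
      12 + 192 * (ζ - 1 / 4) ^ 2 := by
    nlinarith [mul_nonneg (sub_nonneg.mpr hζ) (sq_nonneg (4 * ζ - 1)),
      mul_nonneg hζ0.le (sq_nonneg (4 * ζ - 1)), mul_pos hζ0 hζ0]
  have hdiv := (le_inv_mul_iff₀ hζ0).mpr hpoly
  linarith

theorem stmt_2 (ε c₀ : ℝ) (hε : ε ∈ Set.Ioo 0 (π / 20)) (hc₀ : 0 < c₀)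
    (φ : ℝ → ℝ)
    (hφ : ∀ ζ : ℝ, φ ζ =
      c₀ * (Real.sin ((π - ε) * ζ + ε / 2) + 64 * (ζ - 1 / 4) ^ 3 * Real.sin (ε / 2)))
    (h1 : ∀ ζ ∈ Set.Ioc (0 : ℝ) (1 / 4),
      (Real.arccos (deriv φ ζ) - ε / 2) ^ 2 - (π - ε) ^ 2 * ζ ^ 2 ≥ 1)
    (h2 : ∀ ζ ∈ Set.Ioc (0 : ℝ) (1 / 4),
      (π - ε) * Real.cos ((π - ε) * ζ + ε / 2) ≥ 12 * Real.sin (ε / 2)) :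
    ∀ ζ ∈ Set.Ioc (0 : ℝ) (1 / 4),
      deriv (deriv φ) ζ + (π - ε) ^ 2 * φ ζ +
          ζ⁻¹ * deriv φ ζ *
            ((Real.arccos (deriv φ ζ) - ε / 2) ^ 2 - (π - ε) ^ 2 * ζ ^ 2) ≥
        48 * c₀ * Real.sin (ε / 2) * (4 * (ζ - 1 / 4) + 1) ^ 2 ∧
      48 * c₀ * Real.sin (ε / 2) * (4 * (ζ - 1 / 4) + 1) ^ 2 ≥ 0 := by
  obtain ⟨hε0, hεπ⟩ := hε
  have hs : 0 < sin (ε / 2) := sin_pos_of_pos_of_lt_pi (by linarith) (by linarith [pi_pos])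
  have hK : (π - ε) ^ 2 ≤ 10 := by nlinarith [pi_lt_d2, pi_pos]
  have hφ' : deriv φ = _ := funext hφ ▸ deriv_profile c₀ (π - ε) (ε / 2) (sin (ε / 2))
  have hφ'' : deriv (deriv φ) = _ := funext hφ ▸ deriv_deriv_profile c₀ (π - ε) (ε / 2) (sin (ε / 2))
  intro ζ hζ
  obtain ⟨hζ0, hζ4⟩ := id hζ
  have hD : c₀ * sin (ε / 2) * (12 + 192 * (ζ - 1 / 4) ^ 2) ≤ deriv φ ζ := by
    rw [hφ']
    nlinarith [h2 ζ hζ]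
  have hζD := mul_le_mul_of_nonneg_left hD (inv_pos.mpr hζ0).le
  have hDQ := le_mul_of_one_le_right (hζD.trans' (by positivity)) (h1 ζ hζ)
  have hpoly := mul_le_mul_of_nonneg_left (cubic_bound hK hζ0 hζ4) (mul_pos hc₀ hs).le
  refine ⟨?_, by positivity⟩
  rw [hφ'', hφ ζ]
  linear_combination hDQ + hζD + hpoly
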